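/- Fix δ ∈ ℝ. There exists a constant C* > 0 such that for all u, v ∈ H the sequence B(u,v) belongs to V' and |B(u,v)|_{V'}^2 = Σ_{n≥1} k_n^{-2} |(B(u,v))_n|^2 ≤ C* |u|_H^2 |v|_H^2, where B is the Sabra bilinear operator with parameter δ. -/
import Mathlib


open ComplexConjugate

noncomputable section

/-- Extension of a sequence `(u_n)_{n ≥ 1}` to integer indices, with the boundary
convention `u_m = 0` for `m ≤ 0` (in particular `u_0 = u_{-1} = 0`). -/
def ext (u : ℕ → ℂ) : ℤ → ℂ := fun m => if 1 ≤ m then u m.toNat else 0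

/-- Wave numbers `k_n = k₀ 2^n`. -/
def kseq (k₀ : ℝ) (n : ℤ) : ℝ := k₀ * 2 ^ n

/-- The Sabra bilinear operator with parameter `δ`. -/
def sabraB (k₀ δ : ℝ) (u v : ℕ → ℂ) : ℕ → ℂ := fun n =>
  (Complex.I / 3) * (kseq k₀ ((n : ℤ) + 1)) *
      ((1 + (δ : ℂ)) * conj (ext v ((n : ℤ) + 1)) * ext u ((n : ℤ) + 2)
        + (2 - (δ : ℂ)) * conj (ext u ((n : ℤ) + 1)) * ext v ((n : ℤ) + 2))
  + (Complex.I / 3) * (kseq k₀ (n : ℤ)) *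
      ((1 - 2 * (δ : ℂ)) * conj (ext u ((n : ℤ) - 1)) * ext v ((n : ℤ) + 1)
        - (1 + (δ : ℂ)) * conj (ext v ((n : ℤ) - 1)) * ext u ((n : ℤ) + 1))
  + (Complex.I / 3) * (kseq k₀ ((n : ℤ) - 1)) *
      ((2 - (δ : ℂ)) * ext u ((n : ℤ) - 1) * ext v ((n : ℤ) - 2)
        + (1 - 2 * (δ : ℂ)) * ext u ((n : ℤ) - 2) * ext v ((n : ℤ) - 1))

/-- Membership in `H`: square-summability over `n ≥ 1`. -/
def memH (u : ℕ → ℂ) : Prop := Summable (fun n : ℕ => ‖u (n + 1)‖ ^ 2)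

/-- The `H`-norm `|u|_H = (∑_{n ≥ 1} |u_n|²)^{1/2}`. -/
def normH (u : ℕ → ℂ) : ℝ := Real.sqrt (∑' n : ℕ, ‖u (n + 1)‖ ^ 2)

/-- Membership in `V`: `u ∈ H` and `∑_{n ≥ 1} k_n² |u_n|² < ∞`. -/
def memV (k₀ : ℝ) (u : ℕ → ℂ) : Prop :=
  memH u ∧ Summable (fun n : ℕ => (kseq k₀ (n + 1)) ^ 2 * ‖u (n + 1)‖ ^ 2)

/-- The `V`-norm `‖u‖_V = (∑_{n ≥ 1} k_n² |u_n|²)^{1/2}`. -/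
def normV (k₀ : ℝ) (u : ℕ → ℂ) : ℝ :=
  Real.sqrt (∑' n : ℕ, (kseq k₀ (n + 1)) ^ 2 * ‖u (n + 1)‖ ^ 2)

/-- Membership in `V'`: `∑_{n ≥ 1} k_n^{-2} |u_n|² < ∞`. -/
def memV' (k₀ : ℝ) (u : ℕ → ℂ) : Prop :=
  Summable (fun n : ℕ => (kseq k₀ (n + 1))⁻¹ ^ 2 * ‖u (n + 1)‖ ^ 2)

/-- The squared `V'`-norm `|u|_{V'}² = ∑_{n ≥ 1} k_n^{-2} |u_n|²`. -/
def normV'sq (k₀ : ℝ) (u : ℕ → ℂ) : ℝ :=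
  ∑' n : ℕ, (kseq k₀ (n + 1))⁻¹ ^ 2 * ‖u (n + 1)‖ ^ 2

set_option maxHeartbeats 1000000

lemma kseq_pos {k₀ : ℝ} (hk₀ : 0 < k₀) (m : ℤ) : 0 < kseq k₀ m := by
  unfold kseq; positivity

lemma kseq_succ (k₀ : ℝ) (m : ℤ) : kseq k₀ (m + 1) = 2 * kseq k₀ m := by
  unfold kseq
  rw [zpow_add_one₀ (by norm_num : (2:ℝ) ≠ 0)]
  ring

lemma ext_coe (u : ℕ → ℂ) (n : ℕ) (h : 1 ≤ n) : ext u (n : ℤ) = u n := by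
  unfold ext
  rw [if_pos (by exact_mod_cast h)]
  simp

lemma aux_add (k : ℝ) (hk : 0 ≤ k) (a b x y z w : ℂ) :
    ‖(Complex.I / 3) * (k : ℂ) * (a * x * y + b * z * w)‖
      ≤ k / 3 * (‖a‖ * ‖x‖ * ‖y‖ + ‖b‖ * ‖z‖ * ‖w‖) := by
  rw [norm_mul, norm_mul]
  have h1 : ‖Complex.I / 3‖ = 1/3 := by simp
  have h2 : ‖(k:ℂ)‖ = k := by rw [Complex.norm_real]; exact abs_of_nonneg hk
  rw [h1, h2]
  have h3 : ‖a * x * y + b * z * w‖ ≤ ‖a‖ * ‖x‖ * ‖y‖ + ‖b‖ * ‖z‖ * ‖w‖ := by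
    refine (norm_add_le _ _).trans ?_
    simp [norm_mul]
  calc 1/3 * k * ‖a * x * y + b * z * w‖
      ≤ 1/3 * k * (‖a‖ * ‖x‖ * ‖y‖ + ‖b‖ * ‖z‖ * ‖w‖) :=
        mul_le_mul_of_nonneg_left h3 (by positivity)
    _ = k / 3 * (‖a‖ * ‖x‖ * ‖y‖ + ‖b‖ * ‖z‖ * ‖w‖) := by ring

lemma aux_sub (k : ℝ) (hk : 0 ≤ k) (a b x y z w : ℂ) :
    ‖(Complex.I / 3) * (k : ℂ) * (a * x * y - b * z * w)‖
      ≤ k / 3 * (‖a‖ * ‖x‖ * ‖y‖ + ‖b‖ * ‖z‖ * ‖w‖) := by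
  have := aux_add k hk a (-b) x y z w
  simpa [sub_eq_add_neg, norm_neg] using this

lemma six_sq (a b c d e f : ℝ) :
    (a+b+c+d+e+f)^2 ≤ 6*(a^2+b^2+c^2+d^2+e^2+f^2) := by
  nlinarith [sq_nonneg (a-b), sq_nonneg (a-c), sq_nonneg (a-d), sq_nonneg (a-e),
    sq_nonneg (a-f), sq_nonneg (b-c), sq_nonneg (b-d), sq_nonneg (b-e), sq_nonneg (b-f),
    sq_nonneg (c-d), sq_nonneg (c-e), sq_nonneg (c-f), sq_nonneg (d-e), sq_nonneg (d-f),
    sq_nonneg (e-f)]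

/-- There is `C* > 0` such that for all `u, v ∈ H`, `B(u,v) ∈ V'` and
`|B(u,v)|_{V'}² ≤ C* |u|_H² |v|_H²`, where `B` is the Sabra bilinear operator with parameter `δ`. -/
theorem sabra_Vprime_estimate (k₀ δ : ℝ) (hk₀ : 0 < k₀) :
    ∃ Cstar : ℝ, 0 < Cstar ∧ ∀ u v : ℕ → ℂ, memH u → memH v →
      memV' k₀ (sabraB k₀ δ u v) ∧
      normV'sq k₀ (sabraB k₀ δ u v)
        ≤ Cstar * (∑' n : ℕ, ‖u (n + 1)‖ ^ 2) * (∑' n : ℕ, ‖v (n + 1)‖ ^ 2) := by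
  set c : ℝ := ‖(1:ℂ) + (δ:ℂ)‖ + ‖(2:ℂ) - (δ:ℂ)‖ + ‖(1:ℂ) - 2*(δ:ℂ)‖ + 1 with hc_def
  have hn1 := norm_nonneg ((1:ℂ) + (δ:ℂ))
  have hn2 := norm_nonneg ((2:ℂ) - (δ:ℂ))
  have hn3 := norm_nonneg ((1:ℂ) - 2*(δ:ℂ))
  have hc1 : 1 ≤ c := by rw [hc_def]; linarith
  have hc0 : 0 ≤ c := by linarith
  have ha1 : ‖(1:ℂ) + (δ:ℂ)‖ ≤ c := by rw [hc_def]; linarith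
  have ha2 : ‖(2:ℂ) - (δ:ℂ)‖ ≤ c := by rw [hc_def]; linarith
  have ha3 : ‖(1:ℂ) - 2*(δ:ℂ)‖ ≤ c := by rw [hc_def]; linarith
  refine ⟨36 * c^2, by nlinarith, ?_⟩
  intro u v hu hv
  set Su := ∑' n : ℕ, ‖u (n+1)‖^2 with hSu_def
  set Sv := ∑' n : ℕ, ‖v (n+1)‖^2 with hSv_def
  have hSu0 : 0 ≤ Su := tsum_nonneg fun n => sq_nonneg _
  have hSv0 : 0 ≤ Sv := tsum_nonneg fun n => sq_nonneg _
  -- pointwise bound on ext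
  have hext : ∀ (w : ℕ → ℂ), Summable (fun n : ℕ => ‖w (n+1)‖^2) → ∀ m : ℤ,
      ‖ext w m‖^2 ≤ ∑' n : ℕ, ‖w (n+1)‖^2 := by
    intro w hw m
    by_cases h : 1 ≤ m
    · rw [show ext w m = w m.toNat by unfold ext; rw [if_pos h]]
      have h1 : 1 ≤ m.toNat := by omega
      have := Summable.le_tsum hw (m.toNat - 1) (fun j _ => sq_nonneg _)
      rwa [Nat.sub_add_cancel h1] at this
    · rw [show ext w m = 0 by unfold ext; rw [if_neg h]]
      simpa using tsum_nonneg fun n : ℕ => sq_nonneg ‖w (n+1)‖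
  -- shifted families
  have hfam : ∀ (w : ℕ → ℂ), Summable (fun n : ℕ => ‖w (n+1)‖^2) →
      (Summable (fun n : ℕ => ‖w (n+2)‖^2)
        ∧ ∑' n : ℕ, ‖w (n+2)‖^2 ≤ ∑' n : ℕ, ‖w (n+1)‖^2)
      ∧ (Summable (fun n : ℕ => ‖ext w ((n:ℕ) : ℤ)‖^2)
        ∧ ∑' n : ℕ, ‖ext w ((n:ℕ) : ℤ)‖^2 ≤ ∑' n : ℕ, ‖w (n+1)‖^2) := by
    intro w hw
    have hA : Summable (fun n : ℕ => ‖w (n+2)‖^2) := by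
      have h := (summable_nat_add_iff (f := fun n : ℕ => ‖w (n+1)‖^2) 1).2 hw
      exact h.congr fun n => by norm_num
    have hAle : ∑' n : ℕ, ‖w (n+2)‖^2 ≤ ∑' n : ℕ, ‖w (n+1)‖^2 :=
      Summable.tsum_le_tsum_of_inj (fun n => n+1) (add_left_injective 1) (fun j _ => sq_nonneg _)
        (fun n => le_of_eq (by norm_num)) hA hw
    have hBeq : (fun n : ℕ => ‖ext w (((n+1 : ℕ)) : ℤ)‖^2) = fun n : ℕ => ‖w (n+1)‖^2 := by
      funext n
      rw [ext_coe w (n+1) (by omega)]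
    have hB : Summable (fun n : ℕ => ‖ext w ((n:ℕ) : ℤ)‖^2) := by
      apply (summable_nat_add_iff (f := fun n : ℕ => ‖ext w ((n:ℕ) : ℤ)‖^2) 1).1
      rw [hBeq]; exact hw
    have hBle : ∑' n : ℕ, ‖ext w ((n:ℕ) : ℤ)‖^2 ≤ ∑' n : ℕ, ‖w (n+1)‖^2 := by
      rw [Summable.tsum_eq_zero_add hB]
      have h0 : ‖ext w (((0:ℕ)) : ℤ)‖^2 = 0 := by unfold ext; norm_num
      rw [h0, zero_add]
      exact le_of_eq (tsum_congr fun n => by rw [ext_coe w (n+1) (by omega)])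
    exact ⟨⟨hA, hAle⟩, ⟨hB, hBle⟩⟩
  obtain ⟨⟨hAu, hAu_le⟩, ⟨hBu, hBu_le⟩⟩ := hfam u hu
  obtain ⟨⟨hAv, hAv_le⟩, ⟨hBv, hBv_le⟩⟩ := hfam v hv
  -- the majorant
  set maj : ℕ → ℝ := fun n =>
    6*c^2*(Su * ‖v (n+2)‖^2 + Su * ‖v (n+2)‖^2 + Sv * ‖u (n+2)‖^2 + Sv * ‖u (n+2)‖^2
      + Sv * ‖ext u ((n:ℕ) : ℤ)‖^2 + Su * ‖ext v ((n:ℕ) : ℤ)‖^2) with hmaj_def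
  have hs1 : Summable (fun n : ℕ => Su * ‖v (n+2)‖^2) := hAv.mul_left Su
  have hs2 : Summable (fun n : ℕ => Sv * ‖u (n+2)‖^2) := hAu.mul_left Sv
  have hs3 : Summable (fun n : ℕ => Sv * ‖ext u ((n:ℕ) : ℤ)‖^2) := hBu.mul_left Sv
  have hs4 : Summable (fun n : ℕ => Su * ‖ext v ((n:ℕ) : ℤ)‖^2) := hBv.mul_left Su
  have hsum_inner : Summable (fun n : ℕ =>
      Su * ‖v (n+2)‖^2 + Su * ‖v (n+2)‖^2 + Sv * ‖u (n+2)‖^2 + Sv * ‖u (n+2)‖^2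
        + Sv * ‖ext u ((n:ℕ) : ℤ)‖^2 + Su * ‖ext v ((n:ℕ) : ℤ)‖^2) :=
    ((((hs1.add hs1).add hs2).add hs2).add hs3).add hs4
  have hmaj : Summable maj := hsum_inner.mul_left _
  -- key pointwise estimate
  have key : ∀ n : ℕ, (kseq k₀ (n + 1))⁻¹ ^ 2 * ‖sabraB k₀ δ u v (n + 1)‖ ^ 2 ≤ maj n := by
    intro n
    set K := kseq k₀ ((n : ℤ) + 1) with hK_def
    have hKpos : 0 < K := kseq_pos hk₀ _
    have e : ((↑(n+1) : ℤ)) = (n : ℤ) + 1 := by push_cast; ring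
    have hkk1 : kseq k₀ ((↑(n+1) : ℤ)) = K := by rw [e]
    have hkk2 : kseq k₀ ((↑(n+1) : ℤ) + 1) = 2 * K := by rw [kseq_succ, hkk1]
    have hkk0 : kseq k₀ ((↑(n+1) : ℤ) - 1) = K / 2 := by
      have h := kseq_succ k₀ ((↑(n+1) : ℤ) - 1)
      rw [sub_add_cancel, hkk1] at h
      linarith
    have eA : ext v ((↑(n+1) : ℤ) + 1) = v (n+2) := by
      rw [show ((↑(n+1) : ℤ) + 1) = ((n+2 : ℕ) : ℤ) by push_cast; ring]
      exact ext_coe v (n+2) (by omega)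
    have eB : ext u ((↑(n+1) : ℤ) + 1) = u (n+2) := by
      rw [show ((↑(n+1) : ℤ) + 1) = ((n+2 : ℕ) : ℤ) by push_cast; ring]
      exact ext_coe u (n+2) (by omega)
    have eC : ext u ((↑(n+1) : ℤ) - 1) = ext u ((n:ℕ) : ℤ) := by
      rw [show ((↑(n+1) : ℤ) - 1) = ((n:ℕ) : ℤ) by push_cast; ring]
    have eD : ext v ((↑(n+1) : ℤ) - 1) = ext v ((n:ℕ) : ℤ) := by
      rw [show ((↑(n+1) : ℤ) - 1) = ((n:ℕ) : ℤ) by push_cast; ring]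
    -- the six products
    set p1 := ‖v (n+2)‖ * ‖ext u ((↑(n+1) : ℤ) + 2)‖ with hp1_def
    set p2 := ‖u (n+2)‖ * ‖ext v ((↑(n+1) : ℤ) + 2)‖ with hp2_def
    set p3 := ‖ext u ((n:ℕ) : ℤ)‖ * ‖v (n+2)‖ with hp3_def
    set p4 := ‖ext v ((n:ℕ) : ℤ)‖ * ‖u (n+2)‖ with hp4_def
    set p5 := ‖ext u ((n:ℕ) : ℤ)‖ * ‖ext v ((↑(n+1) : ℤ) - 2)‖ with hp5_def
    set p6 := ‖ext u ((↑(n+1) : ℤ) - 2)‖ * ‖ext v ((n:ℕ) : ℤ)‖ with hp6_def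
    have hnorm : ‖sabraB k₀ δ u v (n + 1)‖ ≤ c * K * (p1 + p2 + p3 + p4 + p5 + p6) := by
      have hA := aux_add (kseq k₀ ((↑(n+1) : ℤ) + 1)) (kseq_pos hk₀ _).le
        (1 + (δ:ℂ)) (2 - (δ:ℂ)) (conj (ext v ((↑(n+1) : ℤ) + 1))) (ext u ((↑(n+1) : ℤ) + 2))
        (conj (ext u ((↑(n+1) : ℤ) + 1))) (ext v ((↑(n+1) : ℤ) + 2))
      have hB := aux_sub (kseq k₀ ((↑(n+1) : ℤ))) (kseq_pos hk₀ _).le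
        (1 - 2*(δ:ℂ)) (1 + (δ:ℂ)) (conj (ext u ((↑(n+1) : ℤ) - 1))) (ext v ((↑(n+1) : ℤ) + 1))
        (conj (ext v ((↑(n+1) : ℤ) - 1))) (ext u ((↑(n+1) : ℤ) + 1))
      have hC := aux_add (kseq k₀ ((↑(n+1) : ℤ) - 1)) (kseq_pos hk₀ _).le
        (2 - (δ:ℂ)) (1 - 2*(δ:ℂ)) (ext u ((↑(n+1) : ℤ) - 1)) (ext v ((↑(n+1) : ℤ) - 2))
        (ext u ((↑(n+1) : ℤ) - 2)) (ext v ((↑(n+1) : ℤ) - 1))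
      simp only [RCLike.norm_conj] at hA hB
      have start : ‖sabraB k₀ δ u v (n + 1)‖ ≤
          kseq k₀ ((↑(n+1) : ℤ) + 1) / 3 * (‖1 + (δ:ℂ)‖ * ‖ext v ((↑(n+1) : ℤ) + 1)‖ * ‖ext u ((↑(n+1) : ℤ) + 2)‖
            + ‖2 - (δ:ℂ)‖ * ‖ext u ((↑(n+1) : ℤ) + 1)‖ * ‖ext v ((↑(n+1) : ℤ) + 2)‖)
          + kseq k₀ ((↑(n+1) : ℤ)) / 3 * (‖1 - 2*(δ:ℂ)‖ * ‖ext u ((↑(n+1) : ℤ) - 1)‖ * ‖ext v ((↑(n+1) : ℤ) + 1)‖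
            + ‖1 + (δ:ℂ)‖ * ‖ext v ((↑(n+1) : ℤ) - 1)‖ * ‖ext u ((↑(n+1) : ℤ) + 1)‖)
          + kseq k₀ ((↑(n+1) : ℤ) - 1) / 3 * (‖2 - (δ:ℂ)‖ * ‖ext u ((↑(n+1) : ℤ) - 1)‖ * ‖ext v ((↑(n+1) : ℤ) - 2)‖
            + ‖1 - 2*(δ:ℂ)‖ * ‖ext u ((↑(n+1) : ℤ) - 2)‖ * ‖ext v ((↑(n+1) : ℤ) - 1)‖) := by
        unfold sabraB
        refine (norm_add₃_le).trans ?_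
        exact add_le_add (add_le_add hA hB) hC
      rw [hkk2, hkk1, hkk0, eA, eB, eC, eD] at start
      refine start.trans ?_
      rw [hp1_def, hp2_def, hp3_def, hp4_def, hp5_def, hp6_def]
      nlinarith [mul_nonneg (mul_nonneg (sub_nonneg.2 ha1) hKpos.le)
          (mul_nonneg (norm_nonneg (v (n+2))) (norm_nonneg (ext u ((↑(n+1) : ℤ) + 2)))),
        mul_nonneg (mul_nonneg (sub_nonneg.2 ha2) hKpos.le)
          (mul_nonneg (norm_nonneg (u (n+2))) (norm_nonneg (ext v ((↑(n+1) : ℤ) + 2)))),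
        mul_nonneg (mul_nonneg (sub_nonneg.2 ha3) hKpos.le)
          (mul_nonneg (norm_nonneg (ext u ((n:ℕ) : ℤ))) (norm_nonneg (v (n+2)))),
        mul_nonneg (mul_nonneg (sub_nonneg.2 ha1) hKpos.le)
          (mul_nonneg (norm_nonneg (ext v ((n:ℕ) : ℤ))) (norm_nonneg (u (n+2)))),
        mul_nonneg (mul_nonneg (sub_nonneg.2 ha2) hKpos.le)
          (mul_nonneg (norm_nonneg (ext u ((n:ℕ) : ℤ))) (norm_nonneg (ext v ((↑(n+1) : ℤ) - 2)))),
        mul_nonneg (mul_nonneg (sub_nonneg.2 ha3) hKpos.le)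
          (mul_nonneg (norm_nonneg (ext u ((↑(n+1) : ℤ) - 2))) (norm_nonneg (ext v ((n:ℕ) : ℤ)))),
        mul_nonneg (mul_nonneg hn1 hKpos.le)
          (mul_nonneg (norm_nonneg (v (n+2))) (norm_nonneg (ext u ((↑(n+1) : ℤ) + 2)))),
        mul_nonneg (mul_nonneg hn2 hKpos.le)
          (mul_nonneg (norm_nonneg (u (n+2))) (norm_nonneg (ext v ((↑(n+1) : ℤ) + 2)))),
        mul_nonneg (mul_nonneg hn3 hKpos.le)
          (mul_nonneg (norm_nonneg (ext u ((n:ℕ) : ℤ))) (norm_nonneg (v (n+2)))),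
        mul_nonneg (mul_nonneg hn1 hKpos.le)
          (mul_nonneg (norm_nonneg (ext v ((n:ℕ) : ℤ))) (norm_nonneg (u (n+2)))),
        mul_nonneg (mul_nonneg hn2 hKpos.le)
          (mul_nonneg (norm_nonneg (ext u ((n:ℕ) : ℤ))) (norm_nonneg (ext v ((↑(n+1) : ℤ) - 2)))),
        mul_nonneg (mul_nonneg hn3 hKpos.le)
          (mul_nonneg (norm_nonneg (ext u ((↑(n+1) : ℤ) - 2))) (norm_nonneg (ext v ((n:ℕ) : ℤ))))]
    -- squared bounds on the six products
    have hp1sq : p1^2 ≤ Su * ‖v (n+2)‖^2 := by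
      rw [hp1_def, mul_pow]
      calc ‖v (n+2)‖^2 * ‖ext u ((↑(n+1) : ℤ) + 2)‖^2
          ≤ ‖v (n+2)‖^2 * Su := mul_le_mul_of_nonneg_left (hext u hu _) (sq_nonneg _)
        _ = Su * ‖v (n+2)‖^2 := by ring
    have hp2sq : p2^2 ≤ Sv * ‖u (n+2)‖^2 := by
      rw [hp2_def, mul_pow]
      calc ‖u (n+2)‖^2 * ‖ext v ((↑(n+1) : ℤ) + 2)‖^2
          ≤ ‖u (n+2)‖^2 * Sv := mul_le_mul_of_nonneg_left (hext v hv _) (sq_nonneg _)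
        _ = Sv * ‖u (n+2)‖^2 := by ring
    have hp3sq : p3^2 ≤ Su * ‖v (n+2)‖^2 := by
      rw [hp3_def, mul_pow]
      exact mul_le_mul_of_nonneg_right (hext u hu _) (sq_nonneg _)
    have hp4sq : p4^2 ≤ Sv * ‖u (n+2)‖^2 := by
      rw [hp4_def, mul_pow]
      exact mul_le_mul_of_nonneg_right (hext v hv _) (sq_nonneg _)
    have hp5sq : p5^2 ≤ Sv * ‖ext u ((n:ℕ) : ℤ)‖^2 := by
      rw [hp5_def, mul_pow]
      calc ‖ext u ((n:ℕ) : ℤ)‖^2 * ‖ext v ((↑(n+1) : ℤ) - 2)‖^2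
          ≤ ‖ext u ((n:ℕ) : ℤ)‖^2 * Sv := mul_le_mul_of_nonneg_left (hext v hv _) (sq_nonneg _)
        _ = Sv * ‖ext u ((n:ℕ) : ℤ)‖^2 := by ring
    have hp6sq : p6^2 ≤ Su * ‖ext v ((n:ℕ) : ℤ)‖^2 := by
      rw [hp6_def, mul_pow]
      exact mul_le_mul_of_nonneg_right (hext u hu _) (sq_nonneg _)
    have hR : p1^2 + p2^2 + p3^2 + p4^2 + p5^2 + p6^2 ≤
        Su * ‖v (n+2)‖^2 + Su * ‖v (n+2)‖^2 + Sv * ‖u (n+2)‖^2 + Sv * ‖u (n+2)‖^2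
          + Sv * ‖ext u ((n:ℕ) : ℤ)‖^2 + Su * ‖ext v ((n:ℕ) : ℤ)‖^2 := by linarith
    have hsq : ‖sabraB k₀ δ u v (n + 1)‖^2 ≤ (c * K * (p1 + p2 + p3 + p4 + p5 + p6))^2 :=
      pow_le_pow_left₀ (norm_nonneg _) hnorm 2
    have hKeq : kseq k₀ ((n : ℤ) + 1) = K := rfl
    calc (kseq k₀ ((n : ℤ) + 1))⁻¹ ^ 2 * ‖sabraB k₀ δ u v (n + 1)‖ ^ 2
        ≤ (kseq k₀ ((n : ℤ) + 1))⁻¹ ^ 2 * (c * K * (p1 + p2 + p3 + p4 + p5 + p6))^2 :=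
          mul_le_mul_of_nonneg_left hsq (by positivity)
      _ = c^2 * (p1 + p2 + p3 + p4 + p5 + p6)^2 := by
          rw [hKeq]
          field_simp
      _ ≤ c^2 * (6*(p1^2 + p2^2 + p3^2 + p4^2 + p5^2 + p6^2)) :=
          mul_le_mul_of_nonneg_left (six_sq p1 p2 p3 p4 p5 p6) (sq_nonneg c)
      _ = 6*c^2 * (p1^2 + p2^2 + p3^2 + p4^2 + p5^2 + p6^2) := by ring
      _ ≤ maj n := by
          rw [hmaj_def]
          exact mul_le_mul_of_nonneg_left hR (by positivity)
  have hsummB : Summable (fun n : ℕ =>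
      (kseq k₀ (n + 1))⁻¹ ^ 2 * ‖sabraB k₀ δ u v (n + 1)‖ ^ 2) :=
    Summable.of_nonneg_of_le (fun n => by positivity) key hmaj
  refine ⟨hsummB, ?_⟩
  have b1 : Su * (∑' n : ℕ, ‖v (n+2)‖^2) ≤ Su * Sv :=
    mul_le_mul_of_nonneg_left hAv_le hSu0
  have b2 : Sv * (∑' n : ℕ, ‖u (n+2)‖^2) ≤ Sv * Su :=
    mul_le_mul_of_nonneg_left hAu_le hSv0
  have b3 : Sv * (∑' n : ℕ, ‖ext u ((n:ℕ) : ℤ)‖^2) ≤ Sv * Su :=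
    mul_le_mul_of_nonneg_left hBu_le hSv0
  have b4 : Su * (∑' n : ℕ, ‖ext v ((n:ℕ) : ℤ)‖^2) ≤ Su * Sv :=
    mul_le_mul_of_nonneg_left hBv_le hSu0
  calc normV'sq k₀ (sabraB k₀ δ u v) ≤ ∑' n, maj n := Summable.tsum_le_tsum key hsummB hmaj
    _ = 6*c^2 * (Su * (∑' n : ℕ, ‖v (n+2)‖^2) + Su * (∑' n : ℕ, ‖v (n+2)‖^2)
        + Sv * (∑' n : ℕ, ‖u (n+2)‖^2) + Sv * (∑' n : ℕ, ‖u (n+2)‖^2)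
        + Sv * (∑' n : ℕ, ‖ext u ((n:ℕ) : ℤ)‖^2) + Su * (∑' n : ℕ, ‖ext v ((n:ℕ) : ℤ)‖^2)) := by
          rw [hmaj_def]
          rw [tsum_mul_left]
          rw [Summable.tsum_add (((((hs1.add hs1).add hs2).add hs2).add hs3)) hs4,
            Summable.tsum_add ((((hs1.add hs1).add hs2).add hs2)) hs3,
            Summable.tsum_add (((hs1.add hs1).add hs2)) hs2,
            Summable.tsum_add ((hs1.add hs1)) hs2,
            Summable.tsum_add hs1 hs1,
            tsum_mul_left, tsum_mul_left, tsum_mul_left, tsum_mul_left]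
    _ ≤ 6*c^2 * (Su * Sv + Su * Sv + Sv * Su + Sv * Su + Sv * Su + Su * Sv) :=
        mul_le_mul_of_nonneg_left (by linarith) (by positivity)
    _ = 36 * c^2 * Su * Sv := by ring

end
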